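/- arXiv:math/0611469 — 4 statements merged into one kernel-verified Lean document; each statement's English description precedes it below -/
import Mathlib

section
/- Let ψ : ℝⁿ → ℝ be a function and for each subset S ⊆ ℝⁿ define T_S := {u ∈ (ℝⁿ)* | ⟨u,v⟩ = ψ(v) for all v ∈ S and ⟨u,v⟩ > ψ(v) for all v ∉ S}. If σ, τ ⊆ ℝⁿ are such that T_σ and T_τ are nonempty, then T_σ ⊆ closure(T_τ) implies τ ⊆ σ. -/
open scoped BigOperators

/-- For ψ : ℝⁿ → ℝ and S ⊆ ℝⁿ, let
`T S := {u ∈ (ℝⁿ)* | ⟨u,v⟩ = ψ v ∀ v ∈ S, ⟨u,v⟩ > ψ v ∀ v ∉ S}` (dual vectors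
represented by their coordinate vectors via the dot-product pairing). If `T σ` and
`T τ` are nonempty and `T σ ⊆ closure (T τ)`, then `τ ⊆ σ`. -/
theorem stmt0 (n : ℕ) (ψ : (Fin n → ℝ) → ℝ) (σ τ : Set (Fin n → ℝ))
    (T : Set (Fin n → ℝ) → Set (Fin n → ℝ))
    (hT : ∀ S, T S =
      {u | (∀ v ∈ S, ∑ i, u i * v i = ψ v) ∧ ∀ v ∉ S, ∑ i, u i * v i > ψ v})
    (hσ : (T σ).Nonempty) (hτ : (T τ).Nonempty)
    (h : T σ ⊆ closure (T τ)) : τ ⊆ σ := by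
  intro v hvτ
  by_contra hvσ
  obtain ⟨u, hu⟩ := hσ
  have huσ := hu
  rw [hT σ] at huσ
  have hgt : ∑ i, u i * v i > ψ v := huσ.2 v hvσ
  -- u ∈ closure (T τ), and f w = ∑ w i * v i is continuous and equals ψ v on T τ
  have hcont : Continuous fun w : Fin n → ℝ => ∑ i, w i * v i := by
    continuity
  have hclosed : IsClosed {w : Fin n → ℝ | ∑ i, w i * v i = ψ v} :=
    isClosed_eq hcont continuous_const
  have hsub : T τ ⊆ {w : Fin n → ℝ | ∑ i, w i * v i = ψ v} := by
    intro w hw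
    rw [hT τ] at hw
    exact hw.1 v hvτ
  have : ∑ i, u i * v i = ψ v :=
    closure_minimal hsub hclosed (h hu)
  linarith
end

section
/- Let ψ : ℝⁿ → ℝ be a positively homogeneous function, let P := {u ∈ (ℝⁿ)* | ⟨u,v⟩ ≥ ψ(v) for all v}, and for a subset σ ⊆ ℝⁿ let T_σ := {u ∈ P | ⟨u,v⟩ = ψ(v) for all v ∈ σ, and ⟨u,v⟩ > ψ(v) for all v ∉ σ}. Then V_σ := ⋃_{τ ⊆ σ} T_τ is a convex subset of (ℝⁿ)*. -/
open scoped BigOperators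

/-- with ψ positively homogeneous, `P := {u | ⟨u,v⟩ ≥ ψ v ∀ v}`,
`T σ := {u ∈ P | ⟨u,v⟩ = ψ v ∀ v ∈ σ, ⟨u,v⟩ > ψ v ∀ v ∉ σ}`, the set
`V σ := ⋃ (τ ⊆ σ), T τ` is convex. -/
theorem stmt1 (n : ℕ) (ψ : (Fin n → ℝ) → ℝ)
    (hψ : ∀ c : ℝ, 0 < c → ∀ v, ψ (c • v) = c * ψ v)
    (P : Set (Fin n → ℝ)) (hP : P = {u | ∀ v, ∑ i, u i * v i ≥ ψ v})
    (T : Set (Fin n → ℝ) → Set (Fin n → ℝ))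
    (hT : ∀ S, T S = {u ∈ P |
      (∀ v ∈ S, ∑ i, u i * v i = ψ v) ∧ ∀ v ∉ S, ∑ i, u i * v i > ψ v})
    (σ : Set (Fin n → ℝ)) :
    Convex ℝ (⋃ (τ : Set (Fin n → ℝ)) (_ : τ ⊆ σ), T τ) := by
  intro a ha b hb t s ht hs hts
  simp only [Set.mem_iUnion] at ha hb ⊢
  obtain ⟨τ, hτσ, haT⟩ := ha
  obtain ⟨γ, hγσ, hbT⟩ := hb
  rcases eq_or_lt_of_le ht with ht0 | ht0
  · have : t = 0 := ht0.symm
    subst this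
    have : s = 1 := by linarith
    subst this
    exact ⟨γ, hγσ, by simpa using hbT⟩
  rcases eq_or_lt_of_le hs with hs0 | hs0
  · have : s = 0 := hs0.symm
    subst this
    have : t = 1 := by linarith
    subst this
    exact ⟨τ, hτσ, by simpa using haT⟩
  rw [hT] at haT hbT
  rw [hP] at haT hbT
  obtain ⟨haP, haeq, hagt⟩ := haT
  obtain ⟨hbP, hbeq, hbgt⟩ := hbT
  have key : ∀ v : Fin n → ℝ, ∑ i, (t • a + s • b) i * v i = t * (∑ i, a i * v i) + s * (∑ i, b i * v i) := by
    intro v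
    rw [Finset.mul_sum, Finset.mul_sum, ← Finset.sum_add_distrib]
    apply Finset.sum_congr rfl
    intro i _
    simp [Pi.add_apply, Pi.smul_apply, smul_eq_mul]
    ring
  refine ⟨τ ∩ γ, fun v hv => hτσ hv.1, ?_⟩
  rw [hT, hP]
  refine ⟨fun v => ?_, fun v hv => ?_, fun v hv => ?_⟩
  · rw [key]
    have h1 := mul_le_mul_of_nonneg_left (haP v) ht
    have h2 := mul_le_mul_of_nonneg_left (hbP v) hs
    have h3 : t * ψ v + s * ψ v = ψ v := by linear_combination ψ v * hts
    linarith
  · rw [key, haeq v hv.1, hbeq v hv.2]; linear_combination ψ v * hts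
  · rw [key]
    have h : v ∉ τ ∨ v ∉ γ := by by_contra h; push_neg at h; exact hv ⟨h.1, h.2⟩
    rcases h with h | h
    · have h1' := mul_lt_mul_of_pos_left (hagt v h) ht0
      have h2' := mul_le_mul_of_nonneg_left (hbP v) hs
      have h3 : t * ψ v + s * ψ v = ψ v := by linear_combination ψ v * hts
      linarith
    · have h1' := mul_lt_mul_of_pos_left (hbgt v h) hs0
      have h2' := mul_le_mul_of_nonneg_left (haP v) ht
      have h3 : t * ψ v + s * ψ v = ψ v := by linear_combination ψ v * hts
      linarith
end

section
/- Let e₁,…,e_k ∈ ℤⁿ and d₁,…,d_k, and fix a subset σ ⊆ {1,…,k}. For m ∈ ℤⁿ define Z(m) := ⋃_{i : ⟨m,e_i⟩ < −d_i} F_{e_i}, where F_{e_i} ⊆ P are the corresponding faces of the polytope P, and V_σ := ⋃_{τ ⊆ σ} T_τ, where the strata T_τ are as in the stratification of P and each T_τ with τ ⊆ σ is nonempty. Then Z(m) ∩ V_σ = ∅ if and only if ⟨m, e_i⟩ ≥ −d_i for all i ∈ σ. -/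
open scoped BigOperators

/-- with `P` the polytope of an ample divisor, strata
`T τ := {u ∈ P | ⟨u, e i⟩ = -a i exactly for i ∈ τ}`, faces
`F i := {u ∈ P | ⟨u, e i⟩ = -a i}`, and, for `m ∈ ℤⁿ`,
`Z m := ⋃ (i : ⟨m, e i⟩ < -d i), F i` and `V σ := ⋃ (τ ⊆ σ), T τ` with every
`T τ` (`τ ⊆ σ`) nonempty, one has `Z m ∩ V σ = ∅ ↔ ∀ i ∈ σ, ⟨m, e i⟩ ≥ -d i`. -/
theorem stmt11 (n k : ℕ) (e : Fin k → (Fin n → ℤ)) (a : Fin k → ℝ) (d : Fin k → ℤ)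
    (σ : Finset (Fin k)) (m : Fin n → ℤ)
    (P : Set (Fin n → ℝ)) (hP : P = {u | ∀ i, ∑ j, u j * (e i j : ℝ) ≥ -a i})
    (T : Finset (Fin k) → Set (Fin n → ℝ))
    (hT : ∀ τ, T τ = {u ∈ P | ∀ i, (∑ j, u j * (e i j : ℝ) = -a i ↔ i ∈ τ)})
    (F : Fin k → Set (Fin n → ℝ))
    (hF : ∀ i, F i = {u ∈ P | ∑ j, u j * (e i j : ℝ) = -a i})
    (Z : Set (Fin n → ℝ))
    (hZ : Z = ⋃ (i : Fin k) (_ : ∑ j, m j * e i j < -d i), F i)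
    (V : Set (Fin n → ℝ)) (hV : V = ⋃ (τ : Finset (Fin k)) (_ : τ ⊆ σ), T τ)
    (hne : ∀ τ ⊆ σ, (T τ).Nonempty) :
    Z ∩ V = ∅ ↔ ∀ i ∈ σ, ∑ j, m j * e i j ≥ -d i := by
  subst hZ hV
  constructor
  · intro h i hi
    by_contra hlt
    rw [not_le] at hlt
    obtain ⟨u, hu⟩ := hne σ (le_refl σ)
    have huT := hu
    rw [hT] at huT
    have : u ∈ (⋃ (i : Fin k) (_ : ∑ j, m j * e i j < -d i), F i) ∩
        ⋃ (τ : Finset (Fin k)) (_ : τ ⊆ σ), T τ := by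
      constructor
      · refine Set.mem_iUnion.2 ⟨i, Set.mem_iUnion.2 ⟨hlt, ?_⟩⟩
        rw [hF]
        exact ⟨huT.1, (huT.2 i).2 hi⟩
      · exact Set.mem_iUnion.2 ⟨σ, Set.mem_iUnion.2 ⟨le_refl σ, hu⟩⟩
    rw [h] at this
    exact this
  · intro h
    ext u
    simp only [Set.mem_inter_iff, Set.mem_iUnion, Set.mem_empty_iff_false, iff_false]
    rintro ⟨⟨i, hlt, hFi⟩, ⟨τ, hτ, hTτ⟩⟩
    rw [hF] at hFi
    rw [hT] at hTτ
    have hiτ : i ∈ τ := (hTτ.2 i).1 hFi.2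
    exact absurd (h i (hτ hiτ)) (not_le.mpr hlt)
end

section
/- Let Δ be a finite collection of subsets of a set E, closed under intersection, and suppose {T_σ}_{σ∈Δ} are pairwise disjoint sets with union P such that closure(T_σ) = ⋃_{τ ⊇ σ, τ ∈ Δ} T_τ for each σ (closures taken in a topology on P). Then for each σ ∈ Δ, the set V_σ := ⋃_{τ ⊆ σ} T_τ is open in P. -/
/-- let `Δ` be a finite, intersection-closed collection of subsets of a
set `E`, and `{T σ}_{σ ∈ Δ}` pairwise disjoint subsets of a topological space `P`
with union all of `P`, such that `closure (T σ) = ⋃ (τ ∈ Δ) (σ ⊆ τ), T τ`.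
Then each `V σ := ⋃ (τ ∈ Δ) (τ ⊆ σ), T τ` is open. -/
theorem stmt17 {E α : Type*} [TopologicalSpace α]
    (Δ : Finset (Set E)) (hΔ : ∀ σ ∈ Δ, ∀ τ ∈ Δ, σ ∩ τ ∈ Δ)
    (T : Set E → Set α)
    (hdisj : ∀ σ ∈ Δ, ∀ τ ∈ Δ, σ ≠ τ → Disjoint (T σ) (T τ))
    (hunion : ⋃ σ ∈ Δ, T σ = Set.univ)
    (hclos : ∀ σ ∈ Δ, closure (T σ) = ⋃ (τ ∈ Δ) (_ : σ ⊆ τ), T τ)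
    (σ : Set E) (hσ : σ ∈ Δ) :
    IsOpen (⋃ (τ ∈ Δ) (_ : τ ⊆ σ), T τ) := by
  rw [← isClosed_compl_iff]
  have hcompl : (⋃ (τ ∈ Δ) (_ : τ ⊆ σ), T τ)ᶜ
      = ⋃ (τ ∈ Δ) (_ : ¬ τ ⊆ σ), closure (T τ) := by
    ext x
    simp only [Set.mem_compl_iff, Set.mem_iUnion, not_exists]
    constructor
    · intro hx
      -- x is in some T ρ with ρ ∈ Δ
      have hx' : x ∈ ⋃ ρ ∈ Δ, T ρ := by rw [hunion]; trivial
      simp only [Set.mem_iUnion] at hx'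
      obtain ⟨ρ, hρ, hxρ⟩ := hx'
      have hns : ¬ ρ ⊆ σ := fun h => hx ρ hρ h hxρ
      exact ⟨ρ, hρ, hns, subset_closure hxρ⟩
    · rintro ⟨τ, hτ, hns, hxc⟩ ρ hρ hρσ hxρ
      rw [hclos τ hτ] at hxc
      simp only [Set.mem_iUnion] at hxc
      obtain ⟨μ, hμ, hτμ, hxμ⟩ := hxc
      have : μ = ρ := by
        by_contra hne
        exact (hdisj μ hμ ρ hρ hne).ne_of_mem hxμ hxρ rfl
      subst this
      exact hns (hτμ.trans hρσ)
  rw [hcompl]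
  exact Set.Finite.isClosed_biUnion Δ.finite_toSet fun τ hτ => by
    by_cases h : τ ⊆ σ <;> simp [h, isClosed_closure]
end
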